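/- arXiv:1610.05495 — 2 statements merged into one kernel-verified Lean document; each statement's English description precedes it below -/
import Mathlib

section
/- For all integers n ≥ 1 and x ∈ (0, 1): arccos(x) < ∫_x^1 U_{2n}(t)/√(1−t²) dt < π − arccos(x); and for x ∈ (−1, 0) both inequalities are reversed. -/
open Real MeasureTheory


noncomputable def chebS (m : ℕ) (φ : ℝ) : ℝ :=
  ∑ k ∈ Finset.range m, Real.sin (((k : ℝ) + 1) * φ) / ((k : ℝ) + 1)

lemma chebS_zero_left (m : ℕ) : chebS m 0 = 0 := by simp [chebS]

lemma chebS_pi (m : ℕ) : chebS m π = 0 := by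
  unfold chebS
  refine Finset.sum_eq_zero fun k _ => ?_
  have : ((k : ℝ) + 1) = ((k + 1 : ℕ) : ℝ) := by push_cast; ring
  rw [this, Real.sin_nat_mul_pi, zero_div]

lemma chebS_continuous (m : ℕ) : Continuous (chebS m) := by
  unfold chebS
  exact continuous_finset_sum _ fun k _ =>
    ((Real.continuous_sin.comp (continuous_const.mul continuous_id)).div_const _)

lemma sum_cos_eq (m : ℕ) (φ : ℝ) :
    2 * Real.sin (φ / 2) * (∑ k ∈ Finset.range m, Real.cos (((k : ℝ) + 1) * φ))
      = Real.sin (((m : ℝ) + 1 / 2) * φ) - Real.sin (φ / 2) := by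
  induction m with
  | zero =>
    rw [Finset.range_zero, Finset.sum_empty, show ((0:ℕ):ℝ) + 1/2 = 1/2 by norm_num,
      show (1:ℝ)/2 * φ = φ/2 by ring]
    ring
  | succ m ih =>
    rw [Finset.sum_range_succ, mul_add, ih]
    have key := Real.sin_sub_sin (((m : ℝ) + 1 + 1 / 2) * φ) (((m : ℝ) + 1 / 2) * φ)
    have e1 : ((((m : ℝ) + 1 + 1 / 2) * φ - ((m : ℝ) + 1 / 2) * φ) / 2) = φ / 2 := by ring
    have e2 : ((((m : ℝ) + 1 + 1 / 2) * φ + ((m : ℝ) + 1 / 2) * φ) / 2) = ((m : ℝ) + 1) * φ := by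
      ring
    rw [e1, e2] at key
    push_cast
    linarith [key]

lemma chebS_hasDerivAt (m : ℕ) (φ : ℝ) :
    HasDerivAt (chebS m) (∑ k ∈ Finset.range m, Real.cos (((k : ℝ) + 1) * φ)) φ := by
  unfold chebS
  refine HasDerivAt.fun_sum fun k _ => ?_
  have h1 : HasDerivAt (fun y : ℝ => ((k : ℝ) + 1) * y) ((k : ℝ) + 1) φ := by
    simpa using (hasDerivAt_id φ).const_mul ((k : ℝ) + 1)
  have h2 := (Real.hasDerivAt_sin (((k : ℝ) + 1) * φ)).comp φ h1
  have h3 := h2.div_const ((k : ℝ) + 1)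
  convert h3 using 1
  · rfl
  · rfl
  · have hk : ((k:ℝ) + 1) ≠ 0 := by positivity
    field_simp


lemma crit_sin_nonneg {N : ℕ} {ψ : ℝ} (hψ : ψ ∈ Set.Ioo 0 π)
    (h : Real.sin (((N : ℝ) + 1 / 2) * ψ) = Real.sin (ψ / 2)) :
    0 ≤ Real.sin ((N : ℝ) * ψ) := by
  obtain ⟨h0, hπ⟩ := hψ
  have hs : 0 < Real.sin (ψ / 2) :=
    Real.sin_pos_of_pos_of_lt_pi (by linarith) (by linarith [Real.pi_pos])
  have hc : 0 ≤ Real.cos (ψ / 2) :=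
    Real.cos_nonneg_of_mem_Icc ⟨by linarith [Real.pi_pos], by linarith⟩
  have p1 := Real.sin_sq_add_cos_sq (((N : ℝ) + 1 / 2) * ψ)
  have p2 := Real.sin_sq_add_cos_sq (ψ / 2)
  have hsq : Real.cos (((N : ℝ) + 1 / 2) * ψ) ^ 2 = Real.cos (ψ / 2) ^ 2 := by
    rw [h] at p1; linarith
  have hB : Real.cos (((N : ℝ) + 1 / 2) * ψ) ≤ Real.cos (ψ / 2) := by nlinarith
  have e : (N : ℝ) * ψ = ((N : ℝ) + 1 / 2) * ψ - ψ / 2 := by ring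
  rw [e, Real.sin_sub, h]
  nlinarith

lemma crit_sin_nonpos {N : ℕ} {ψ : ℝ} (hψ : ψ ∈ Set.Ioo 0 π)
    (h : Real.sin (((N : ℝ) + 1 / 2) * ψ) = -Real.sin (ψ / 2)) :
    Real.sin ((N : ℝ) * ψ) ≤ 0 := by
  obtain ⟨h0, hπ⟩ := hψ
  have hs : 0 < Real.sin (ψ / 2) :=
    Real.sin_pos_of_pos_of_lt_pi (by linarith) (by linarith [Real.pi_pos])
  have hc : 0 ≤ Real.cos (ψ / 2) :=
    Real.cos_nonneg_of_mem_Icc ⟨by linarith [Real.pi_pos], by linarith⟩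
  have p1 := Real.sin_sq_add_cos_sq (((N : ℝ) + 1 / 2) * ψ)
  have p2 := Real.sin_sq_add_cos_sq (ψ / 2)
  have hsq : Real.cos (((N : ℝ) + 1 / 2) * ψ) ^ 2 = Real.cos (ψ / 2) ^ 2 := by
    rw [h] at p1; nlinarith
  have hB : -Real.cos (ψ / 2) ≤ Real.cos (((N : ℝ) + 1 / 2) * ψ) := by nlinarith
  have e : (N : ℝ) * ψ = ((N : ℝ) + 1 / 2) * ψ - ψ / 2 := by ring
  rw [e, Real.sin_sub, h]
  nlinarith

lemma exists_interior_min {f : ℝ → ℝ} (hf : Continuous f) (hfπ : f π = 0) (hf0 : 0 ≤ f 0)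
    {φ : ℝ} (hφ : φ ∈ Set.Ioo 0 π) (hneg : f φ ≤ 0) :
    ∃ ψ ∈ Set.Ioo 0 π, f ψ ≤ 0 ∧ IsMinOn f (Set.Icc 0 π) ψ := by
  obtain ⟨ψ, hψm, hmin⟩ := isCompact_Icc.exists_isMinOn (Set.nonempty_Icc.mpr Real.pi_pos.le)
    hf.continuousOn
  have hle : f ψ ≤ f φ := hmin (Set.mem_Icc.mpr ⟨hφ.1.le, hφ.2.le⟩)
  by_cases hψ : ψ ∈ Set.Ioo 0 π
  · exact ⟨ψ, hψ, hle.trans hneg, hmin⟩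
  · have h0 : 0 ≤ f ψ := by
      rcases hψm with ⟨h1, h2⟩
      rcases h1.lt_or_eq with h1 | h1
      · rcases h2.lt_or_eq with h2 | h2
        · exact absurd ⟨h1, h2⟩ hψ
        · rw [h2, hfπ]
      · rw [← h1]; exact hf0
    have hfφ : f φ = 0 := le_antisymm hneg (h0.trans hle)
    refine ⟨φ, hφ, hfφ.le, fun y hy => ?_⟩
    simp only [Set.mem_setOf_eq, hfφ]
    exact h0.trans (hmin hy)

lemma chebS_reflect (m : ℕ) (φ : ℝ) : chebS m (2 * π - φ) = -chebS m φ := by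
  unfold chebS
  rw [← Finset.sum_neg_distrib]
  refine Finset.sum_congr rfl fun k _ => ?_
  have harg : ((k : ℝ) + 1) * (2 * π - φ) = -(((k : ℝ) + 1) * φ) + ((k + 1 : ℕ) : ℝ) * (2 * π) := by
    push_cast; ring
  rw [harg, Real.sin_add_nat_mul_two_pi, Real.sin_neg, neg_div]
lemma chebS_succ (m : ℕ) (φ : ℝ) :
    chebS (m + 1) φ = chebS m φ + Real.sin (((m : ℝ) + 1) * φ) / ((m : ℝ) + 1) :=
  Finset.sum_range_succ _ m
lemma chebS_one (φ : ℝ) : chebS 1 φ = Real.sin φ := by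
  simp [chebS]
lemma chebS_zero (φ : ℝ) : chebS 0 φ = 0 := by simp [chebS]

lemma sin_pos' {ψ : ℝ} (h : ψ ∈ Set.Ioo 0 π) : 0 < Real.sin ψ :=
  Real.sin_pos_of_pos_of_lt_pi h.1 h.2

lemma chebS_pos (m : ℕ) : ∀ φ ∈ Set.Ioo (0 : ℝ) π, 0 < chebS (m + 1) φ := by
  induction m with
  | zero => intro φ hφ; rw [chebS_one]; exact sin_pos' hφ
  | succ m ih =>
    intro φ hφ
    by_contra hcon
    push_neg at hcon
    obtain ⟨ψ, hψ, hψle, hmin⟩ := exists_interior_min (chebS_continuous (m + 2))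
      (chebS_pi _) (by rw [chebS_zero_left]) hφ hcon
    have hloc : IsLocalMin (chebS (m + 2)) ψ := hmin.isLocalMin (Icc_mem_nhds hψ.1 hψ.2)
    have hd0 : (∑ k ∈ Finset.range (m + 2), Real.cos (((k : ℝ) + 1) * ψ)) = 0 :=
      hloc.hasDerivAt_eq_zero (chebS_hasDerivAt (m + 2) ψ)
    have hsin : Real.sin ((((m + 2 : ℕ) : ℝ)) * ψ) ≥ 0 := by
      refine le_of_eq_of_le rfl (crit_sin_nonneg hψ ?_)
      have := sum_cos_eq (m + 2) ψ
      rw [hd0] at this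
      linarith
    have hsplit := chebS_succ (m + 1) ψ
    have hcast : ((m + 1 : ℕ) : ℝ) + 1 = ((m + 2 : ℕ) : ℝ) := by push_cast; ring
    rw [hcast] at hsplit
    have hpos := ih ψ hψ
    have hNpos : (0 : ℝ) < ((m + 2 : ℕ) : ℝ) := by positivity
    have hdiv : 0 ≤ Real.sin (((m + 2 : ℕ) : ℝ) * ψ) / ((m + 2 : ℕ) : ℝ) :=
      div_nonneg hsin hNpos.le
    rw [show m + 1 + 1 = m + 2 from rfl] at hsplit
    push_cast at hsplit hsin hdiv hψle ⊢
    linarith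

lemma chebS_lt (m : ℕ) : ∀ φ ∈ Set.Ioo (0 : ℝ) π, chebS m φ < π - φ := by
  induction m with
  | zero => intro φ hφ; rw [chebS_zero]; linarith [hφ.2]
  | succ m ih =>
    intro φ hφ
    by_contra hcon
    push_neg at hcon
    set f : ℝ → ℝ := fun φ => π - φ - chebS (m + 1) φ with hf
    have hfc : Continuous f := (continuous_const.sub continuous_id).sub (chebS_continuous _)
    have hfπ : f π = 0 := by simp [hf, chebS_pi]
    have hf0 : 0 ≤ f 0 := by simp [hf, chebS_zero_left]; positivity
    obtain ⟨ψ, hψ, hψle, hmin⟩ := exists_interior_min hfc hfπ hf0 hφ (by simp [hf]; linarith)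
    have hloc : IsLocalMin f ψ := hmin.isLocalMin (Icc_mem_nhds hψ.1 hψ.2)
    have hd : HasDerivAt f (-1 - ∑ k ∈ Finset.range (m + 1), Real.cos (((k : ℝ) + 1) * ψ)) ψ :=
      ((hasDerivAt_id ψ).const_sub π).sub (chebS_hasDerivAt (m + 1) ψ)
    have hd0 := hloc.hasDerivAt_eq_zero hd
    have hsum : (∑ k ∈ Finset.range (m + 1), Real.cos (((k : ℝ) + 1) * ψ)) = -1 := by linarith
    have hsin : Real.sin ((((m + 1 : ℕ) : ℝ)) * ψ) ≤ 0 := by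
      refine crit_sin_nonpos hψ ?_
      have := sum_cos_eq (m + 1) ψ
      rw [hsum] at this
      have hx := sin_pos' (show ψ/2 ∈ Set.Ioo (0:ℝ) π from ⟨by linarith [hψ.1], by linarith [hψ.2, Real.pi_pos]⟩)
      linarith
    have hsplit := chebS_succ m ψ
    have hcast : ((m : ℕ) : ℝ) + 1 = ((m + 1 : ℕ) : ℝ) := by push_cast; ring
    rw [hcast] at hsplit
    have hih := ih ψ hψ
    have hNpos : (0 : ℝ) < ((m + 1 : ℕ) : ℝ) := by positivity
    have : Real.sin (((m + 1 : ℕ) : ℝ) * ψ) / ((m + 1 : ℕ) : ℝ) ≤ 0 :=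
      div_nonpos_of_nonpos_of_nonneg hsin hNpos.le
    have : f ψ > 0 := by simp only [hf]; linarith
    linarith

lemma integrand_integrable (P : Polynomial ℝ) {x : ℝ} (hx : x ∈ Set.Ioo (-1 : ℝ) 1) :
    IntervalIntegrable (fun t => P.eval t / Real.sqrt (1 - t ^ 2)) volume x 1 := by
  obtain ⟨hx1, hx2⟩ := hx
  have meas : Measurable fun t : ℝ => P.eval t / Real.sqrt (1 - t ^ 2) :=
    P.continuous.measurable.div
      (Real.continuous_sqrt.comp (continuous_const.sub (continuous_pow 2))).measurable
  have h01 : IntervalIntegrable (fun t => P.eval t / Real.sqrt (1 - t ^ 2)) volume 0 1 := by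
    obtain ⟨C, hC⟩ := isCompact_Icc.exists_bound_of_continuousOn
      (P.continuous.continuousOn : ContinuousOn (fun t => P.eval t) (Set.Icc (0 : ℝ) 1))
    have hC0 : 0 ≤ C := le_trans (norm_nonneg _) (hC 0 (by norm_num))
    have hg : IntervalIntegrable (fun t : ℝ => C * (1 - t) ^ (-(1 / 2) : ℝ)) volume 0 1 := by
      have h1 : IntervalIntegrable (fun s : ℝ => s ^ (-(1 / 2) : ℝ)) volume 0 1 :=
        intervalIntegral.intervalIntegrable_rpow' (by norm_num)
      have h2 := h1.comp_sub_left 1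
      norm_num at h2
      exact (h2.const_mul C).symm
    refine hg.mono_fun' (meas.aestronglyMeasurable) ?_
    refine ae_restrict_of_forall_mem measurableSet_uIoc fun t ht => ?_
    rw [Set.uIoc_of_le (by norm_num : (0:ℝ) ≤ 1)] at ht
    obtain ⟨ht0, ht1⟩ := ht
    rcases eq_or_lt_of_le ht1 with h1 | h1
    · subst h1
      simp [Real.zero_rpow, Real.sqrt_eq_zero']
    · have hpos : 0 < 1 - t := by linarith
      have hsplit : Real.sqrt (1 - t ^ 2) = Real.sqrt (1 - t) * Real.sqrt (1 + t) := by
        rw [← Real.sqrt_mul hpos.le]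
        ring_nf
      have hone : (1 : ℝ) ≤ Real.sqrt (1 + t) := by
        have := Real.sqrt_le_sqrt (show (1:ℝ) ≤ 1 + t by linarith)
        rwa [Real.sqrt_one] at this
      have hsq : Real.sqrt (1 - t) ≤ Real.sqrt (1 - t ^ 2) := by
        rw [hsplit]
        nlinarith [Real.sqrt_nonneg (1 - t)]
      have hsqp : 0 < Real.sqrt (1 - t) := Real.sqrt_pos.mpr hpos
      have hRHS : (1 - t) ^ (-(1 / 2) : ℝ) = (Real.sqrt (1 - t))⁻¹ := by
        rw [Real.rpow_neg hpos.le, Real.sqrt_eq_rpow]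
      show ‖P.eval t / Real.sqrt (1 - t ^ 2)‖ ≤ C * (1 - t) ^ (-(1 / 2) : ℝ)
      rw [hRHS]
      have hbound : ‖P.eval t‖ ≤ C := hC t ⟨ht0.le, ht1⟩
      have : ‖P.eval t / Real.sqrt (1 - t ^ 2)‖ = ‖P.eval t‖ / Real.sqrt (1 - t ^ 2) := by
        rw [norm_div, Real.norm_eq_abs (Real.sqrt _), abs_of_nonneg (Real.sqrt_nonneg _)]
      rw [this]
      calc ‖P.eval t‖ / Real.sqrt (1 - t ^ 2) ≤ C / Real.sqrt (1 - t) := by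
            apply div_le_div₀ hC0 hbound hsqp hsq
        _ = C * (Real.sqrt (1 - t))⁻¹ := by rw [div_eq_mul_inv]
  have hx0 : IntervalIntegrable (fun t => P.eval t / Real.sqrt (1 - t ^ 2)) volume x 0 := by
    apply ContinuousOn.intervalIntegrable
    apply ContinuousOn.div P.continuous.continuousOn
      (Real.continuous_sqrt.comp (continuous_const.sub (continuous_pow 2))).continuousOn
    intro t ht
    have h1 : -1 < t ∧ t < 1 := by
      rcases Set.mem_uIcc.mp ht with ⟨h, h'⟩ | ⟨h, h'⟩ <;> constructor <;> linarith
    have hpos : (0:ℝ) < 1 - t ^ 2 := by nlinarith [h1.1, h1.2]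
    exact (Real.sqrt_pos.mpr hpos).ne'
  exact hx0.trans h01

lemma arccos_mem {t : ℝ} (ht : t ∈ Set.Ioo (-1 : ℝ) 1) :
    Real.arccos t ∈ Set.Ioo 0 π := by
  constructor
  · exact Real.arccos_pos.mpr ht.2
  · rw [Real.arccos_eq_pi_div_two_sub_arcsin]
    have := Real.neg_pi_div_two_lt_arcsin.mpr ht.1
    linarith

lemma integral_eq_arccos_add (n : ℕ) {x : ℝ} (hx : x ∈ Set.Ioo (-1 : ℝ) 1) :
    (∫ t in x..(1 : ℝ), (Polynomial.Chebyshev.U ℝ (2 * n)).eval t / Real.sqrt (1 - t ^ 2))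
      = Real.arccos x + chebS n (2 * Real.arccos x) := by
  set P := Polynomial.Chebyshev.U ℝ (2 * n) with hP
  set F : ℝ → ℝ := fun t => -(Real.arccos t + chebS n (2 * Real.arccos t)) with hF
  have hcont : ContinuousOn F (Set.Icc x 1) :=
    ((Real.continuous_arccos.add
      ((chebS_continuous n).comp (continuous_const.mul Real.continuous_arccos))).neg).continuousOn
  have hderiv : ∀ t ∈ Set.Ioo x 1,
      HasDerivWithinAt F (P.eval t / Real.sqrt (1 - t ^ 2)) (Set.Ioi t) t := by
    intro t ht
    have ht1 : t ≠ 1 := ne_of_lt ht.2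
    have ht1' : t ≠ -1 := by have := hx.1; have := ht.1; intro h; rw [h] at this; linarith
    have htIoo : t ∈ Set.Ioo (-1 : ℝ) 1 := ⟨by have := hx.1; have := ht.1; linarith, ht.2⟩
    set θ := Real.arccos t with hθ
    have hθm : θ ∈ Set.Ioo 0 π := arccos_mem htIoo
    have hsθ : 0 < Real.sin θ := Real.sin_pos_of_pos_of_lt_pi hθm.1 hθm.2
    have hcos : Real.cos θ = t := Real.cos_arccos (by linarith [htIoo.1]) (by linarith [htIoo.2])
    set s := Real.sqrt (1 - t ^ 2) with hs
    have hspos : 0 < s := Real.sqrt_pos.mpr (by nlinarith [htIoo.1, htIoo.2])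
    have hda : HasDerivAt Real.arccos (-(1 / s)) t := Real.hasDerivAt_arccos ht1' ht1
    have hd2 : HasDerivAt (fun t : ℝ => 2 * Real.arccos t) (2 * -(1 / s)) t := hda.const_mul 2
    set c := ∑ k ∈ Finset.range n, Real.cos (((k : ℝ) + 1) * (2 * θ)) with hc
    have hdS : HasDerivAt (fun t : ℝ => chebS n (2 * Real.arccos t)) (c * (2 * -(1 / s))) t :=
      HasDerivAt.comp (h₂ := chebS n) t (chebS_hasDerivAt n (2 * θ)) hd2
    have hdF : HasDerivAt F (-(-(1 / s) + c * (2 * -(1 / s)))) t := (hda.add hdS).neg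
    -- identify the derivative value
    have hkey : P.eval t * Real.sin θ = Real.sin ((2 * (n : ℝ) + 1) * θ) := by
      have := Polynomial.Chebyshev.U_real_cos θ (2 * n)
      rw [hcos] at this
      rw [hP]
      convert this using 3
      push_cast
      ring
    have hsum : 2 * Real.sin θ * c = Real.sin ((2 * (n : ℝ) + 1) * θ) - Real.sin θ := by
      have := sum_cos_eq n (2 * θ)
      rw [show (2 * θ) / 2 = θ by ring, show ((n : ℝ) + 1 / 2) * (2 * θ) = (2 * (n : ℝ) + 1) * θ by ring] at this
      exact this
    have hPt : P.eval t = 1 + 2 * c := by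
      have h1 : P.eval t * Real.sin θ = (1 + 2 * c) * Real.sin θ := by
        rw [hkey]; nlinarith [hsum]
      exact mul_right_cancel₀ (ne_of_gt hsθ) h1
    have hval : -(-(1 / s) + c * (2 * -(1 / s))) = P.eval t / s := by
      rw [hPt]; field_simp; ring
    rw [← hval]
    exact hdF.hasDerivWithinAt
  have hint := integrand_integrable P hx
  have := intervalIntegral.integral_eq_sub_of_hasDeriv_right_of_le hx.2.le hcont hderiv hint
  rw [this, hF]
  simp [Real.arccos_one, chebS_zero_left]

theorem stmt_17 (n : ℕ) (hn : 1 ≤ n) :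
    (∀ x ∈ Set.Ioo (0 : ℝ) 1,
      Real.arccos x <
        (∫ t in x..(1 : ℝ),
          (Polynomial.Chebyshev.U ℝ (2 * n)).eval t / Real.sqrt (1 - t ^ 2)) ∧
      (∫ t in x..(1 : ℝ),
          (Polynomial.Chebyshev.U ℝ (2 * n)).eval t / Real.sqrt (1 - t ^ 2)) <
        Real.pi - Real.arccos x) ∧
    (∀ x ∈ Set.Ioo (-1 : ℝ) 0,
      (∫ t in x..(1 : ℝ),
          (Polynomial.Chebyshev.U ℝ (2 * n)).eval t / Real.sqrt (1 - t ^ 2)) <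
        Real.arccos x ∧
      Real.pi - Real.arccos x <
        (∫ t in x..(1 : ℝ),
          (Polynomial.Chebyshev.U ℝ (2 * n)).eval t / Real.sqrt (1 - t ^ 2))) := by
  obtain ⟨m, rfl⟩ : ∃ m, n = m + 1 := ⟨n - 1, (Nat.succ_pred_eq_of_pos hn).symm⟩
  constructor
  · intro x hx
    have hx' : x ∈ Set.Ioo (-1 : ℝ) 1 := ⟨by linarith [hx.1], hx.2⟩
    have hι := integral_eq_arccos_add (m + 1) hx'
    set θ := Real.arccos x with hθ
    have hθm : θ ∈ Set.Ioo 0 π := arccos_mem hx'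
    have hθ2 : θ < π / 2 := Real.arccos_lt_pi_div_two.mpr hx.1
    have h2θ : 2 * θ ∈ Set.Ioo (0 : ℝ) π := ⟨by linarith [hθm.1], by linarith⟩
    have hpos := chebS_pos m (2 * θ) h2θ
    have hlt := chebS_lt (m + 1) (2 * θ) h2θ
    rw [hι]
    constructor <;> linarith
  · intro x hx
    have hx' : x ∈ Set.Ioo (-1 : ℝ) 1 := ⟨hx.1, by linarith [hx.2]⟩
    have hι := integral_eq_arccos_add (m + 1) hx'
    set θ := Real.arccos x with hθ
    have hθm : θ ∈ Set.Ioo 0 π := arccos_mem hx'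
    have hθ2 : π / 2 < θ := by
      by_contra h
      push_neg at h
      exact absurd (Real.arccos_le_pi_div_two.mp h) (not_le.mpr hx.2)
    set φ' : ℝ := 2 * π - 2 * θ with hφ'
    have hφm : φ' ∈ Set.Ioo (0 : ℝ) π := ⟨by simp only [hφ']; linarith [hθm.2], by simp only [hφ']; linarith⟩
    have hrefl : chebS (m + 1) (2 * θ) = -chebS (m + 1) φ' := by
      rw [show 2 * θ = 2 * π - φ' by simp only [hφ']; ring]
      exact chebS_reflect (m + 1) φ'
    have hpos := chebS_pos m φ' hφm
    have hlt := chebS_lt (m + 1) φ' hφm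
    rw [hι, hrefl]
    constructor <;> linarith
end

section
/- For all integers n ≥ 0 and x ∈ (0, π): 0 < ∑_{j=0}^n sin((2j+1)x)/(2j+1) ≤ 1, with equality on the right if and only if n = 0 and x = π/2. -/
open Real Finset

noncomputable def carlK (N : ℕ) (t : ℝ) : ℝ := ∑ j ∈ Finset.range N, Real.cos ((2 * j + 1) * t)

noncomputable def carlF (N : ℕ) (x : ℝ) : ℝ := ∫ t in (0:ℝ)..x, carlK N t

lemma carlK_cont (N : ℕ) : Continuous (carlK N) := by
  unfold carlK
  exact continuous_finset_sum _ fun j _ =>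
    (Real.continuous_cos.comp (continuous_const.mul continuous_id))

lemma carlK_intble (N : ℕ) (a b : ℝ) : IntervalIntegrable (carlK N) MeasureTheory.volume a b :=
  (carlK_cont N).intervalIntegrable a b

lemma carlK_eq (N : ℕ) (t : ℝ) (h : Real.sin t ≠ 0) :
    carlK N t = Real.sin (2 * N * t) / (2 * Real.sin t) := by
  rw [eq_div_iff (by simpa using h)]
  unfold carlK
  rw [Finset.sum_mul]
  have key : ∀ j : ℕ, Real.cos ((2 * (j:ℝ) + 1) * t) * (2 * Real.sin t)
      = Real.sin (2 * ((j:ℝ)+1) * t) - Real.sin (2 * (j:ℝ) * t) := by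
    intro j
    have h1 : (2 * ((j:ℝ)+1)) * t = (2 * (j:ℝ) + 1) * t + t := by ring
    have h2 : (2 * (j:ℝ)) * t = (2 * (j:ℝ) + 1) * t - t := by ring
    rw [h1, h2, Real.sin_add, Real.sin_sub]; ring
  calc ∑ j ∈ Finset.range N, Real.cos ((2 * j + 1) * t) * (2 * Real.sin t)
      = ∑ j ∈ Finset.range N,
          (Real.sin (2 * ((j:ℝ)+1) * t) - Real.sin (2 * (j:ℝ) * t)) := by
        exact Finset.sum_congr rfl fun j _ => key j
    _ = Real.sin (2 * (N:ℝ) * t) - Real.sin (2 * ((0:ℕ):ℝ) * t) := by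
        have := Finset.sum_range_sub (fun j : ℕ => Real.sin (2 * (j:ℝ) * t)) N
        simpa [Nat.cast_add, Nat.cast_one] using this
    _ = Real.sin (2 * N * t) := by norm_num

lemma sin_t_pos {t : ℝ} (h0 : 0 < t) (h2 : t ≤ π / 2) : 0 < Real.sin t :=
  Real.sin_pos_of_pos_of_lt_pi h0 (lt_of_le_of_lt h2 (by linarith [Real.pi_pos]))

lemma neg_one_pow_sq (m : ℕ) : ((-1:ℝ))^m * (-1)^m = 1 := by
  rw [← pow_add]
  exact Even.neg_one_pow ⟨m, by ring⟩

-- sign of sin(2Nt) on the m-th block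
lemma carl_sin_sign {N m : ℕ} (hm : m + 1 ≤ N) {t : ℝ}
    (h1 : (m:ℝ) * (π/(2*N)) ≤ t) (h2 : t ≤ ((m:ℝ)+1) * (π/(2*N))) :
    0 ≤ (-1:ℝ)^m * Real.sin (2 * N * t) := by
  have hN : (0:ℝ) < N := by exact_mod_cast Nat.lt_of_lt_of_le (Nat.zero_lt_succ m) hm
  have hv : 2 * (N:ℝ) * t = (2 * (N:ℝ) * t - m * π) + m * π := by ring
  rw [hv, Real.sin_add_nat_mul_pi, ← mul_assoc, neg_one_pow_sq, one_mul]
  apply Real.sin_nonneg_of_nonneg_of_le_pi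
  · have : (m:ℝ) * π = 2 * N * ((m:ℝ) * (π/(2*N))) := by field_simp
    nlinarith
  · have : ((m:ℝ)+1) * π = 2 * N * (((m:ℝ)+1) * (π/(2*N))) := by field_simp
    nlinarith

lemma carl_sin_sign_strict {N m : ℕ} (hm : m + 1 ≤ N) {t : ℝ}
    (h1 : (m:ℝ) * (π/(2*N)) < t) (h2 : t < ((m:ℝ)+1) * (π/(2*N))) :
    0 < (-1:ℝ)^m * Real.sin (2 * N * t) := by
  have hN : (0:ℝ) < N := by exact_mod_cast Nat.lt_of_lt_of_le (Nat.zero_lt_succ m) hm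
  have hv : 2 * (N:ℝ) * t = (2 * (N:ℝ) * t - m * π) + m * π := by ring
  rw [hv, Real.sin_add_nat_mul_pi, ← mul_assoc, neg_one_pow_sq, one_mul]
  apply Real.sin_pos_of_pos_of_lt_pi
  · have : (m:ℝ) * π = 2 * N * ((m:ℝ) * (π/(2*N))) := by field_simp
    nlinarith
  · have : ((m:ℝ)+1) * π = 2 * N * (((m:ℝ)+1) * (π/(2*N))) := by field_simp
    nlinarith

-- sign of K on a closed block
lemma carlK_sign {N m : ℕ} (hm : m + 1 ≤ N) {t : ℝ}
    (h1 : (m:ℝ) * (π/(2*N)) ≤ t) (h2 : t ≤ ((m:ℝ)+1) * (π/(2*N))) :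
    0 ≤ (-1:ℝ)^m * carlK N t := by
  have hN : (0:ℝ) < N := by exact_mod_cast Nat.lt_of_lt_of_le (Nat.zero_lt_succ m) hm
  have hh : (0:ℝ) < π/(2*N) := by positivity
  rcases eq_or_lt_of_le (le_trans (by positivity) h1 : (0:ℝ) ≤ t) with h0 | h0
  · -- t = 0
    have hm0 : (m:ℝ) * (π/(2*N)) ≤ 0 := h0 ▸ h1
    have : (m:ℝ) = 0 := by
      by_contra hc
      have : (0:ℝ) < m := lt_of_le_of_ne (Nat.cast_nonneg m) (Ne.symm hc)
      nlinarith
    have hm00 : m = 0 := by exact_mod_cast this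
    subst hm00
    simp only [pow_zero, one_mul, ← h0]
    unfold carlK
    apply Finset.sum_nonneg
    intro j _
    simp
  · have h2' : t ≤ π/2 := by
      have hNle : ((m:ℝ)+1) ≤ N := by exact_mod_cast hm
      have : ((m:ℝ)+1) * (π/(2*N)) ≤ (N:ℝ) * (π/(2*N)) := by nlinarith
      have hNh : (N:ℝ) * (π/(2*N)) = π/2 := by field_simp
      linarith [hNh ▸ this]
    have hst : 0 < Real.sin t := sin_t_pos h0 h2'
    rw [carlK_eq N t (ne_of_gt hst)]
    rw [← mul_div_assoc]
    exact div_nonneg (carl_sin_sign hm h1 h2) (by linarith)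

lemma carlK_pos {N m : ℕ} (hm : m + 1 ≤ N) {t : ℝ}
    (h1 : (m:ℝ) * (π/(2*N)) < t) (h2 : t < ((m:ℝ)+1) * (π/(2*N))) :
    0 < (-1:ℝ)^m * carlK N t := by
  have hN : (0:ℝ) < N := by exact_mod_cast Nat.lt_of_lt_of_le (Nat.zero_lt_succ m) hm
  have hh : (0:ℝ) < π/(2*N) := by positivity
  have h0 : 0 < t := lt_of_le_of_lt (by positivity) h1
  have h2' : t ≤ π/2 := by
    have hNle : ((m:ℝ)+1) ≤ N := by exact_mod_cast hm
    have : ((m:ℝ)+1) * (π/(2*N)) ≤ (N:ℝ) * (π/(2*N)) := by nlinarith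
    have hNh : (N:ℝ) * (π/(2*N)) = π/2 := by field_simp
    linarith [hNh ▸ this]
  have hst : 0 < Real.sin t := sin_t_pos h0 h2'
  rw [carlK_eq N t (ne_of_gt hst), ← mul_div_assoc]
  exact div_pos (carl_sin_sign_strict hm h1 h2) (by linarith)

-- single block integral sign (strict)
lemma carl_block {N m : ℕ} (hm : m + 1 ≤ N) :
    0 < (-1:ℝ)^m * (carlF N (((m:ℝ)+1) * (π/(2*N))) - carlF N ((m:ℝ) * (π/(2*N)))) := by
  have hN : (0:ℝ) < N := by exact_mod_cast Nat.lt_of_lt_of_le (Nat.zero_lt_succ m) hm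
  have hh : (0:ℝ) < π/(2*N) := by positivity
  unfold carlF
  rw [intervalIntegral.integral_interval_sub_left (carlK_intble N 0 _) (carlK_intble N 0 _)]
  rw [← intervalIntegral.integral_const_mul]
  apply intervalIntegral.intervalIntegral_pos_of_pos_on
  · exact (continuous_const.mul (carlK_cont N)).intervalIntegrable _ _
  · intro t ht
    exact carlK_pos hm ht.1 ht.2
  · nlinarith

-- pair of blocks integral sign (strict)
lemma carl_pair {N m : ℕ} (hm : m + 2 ≤ N) :
    0 < (-1:ℝ)^m * (carlF N (((m:ℝ)+2) * (π/(2*N))) - carlF N ((m:ℝ) * (π/(2*N)))) := by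
  have hN : (0:ℝ) < N := by exact_mod_cast Nat.lt_of_lt_of_le (by omega : 0 < m + 2) hm
  set h : ℝ := π/(2*N) with hhdef
  have hh : (0:ℝ) < h := by positivity
  have hNh : (N:ℝ) * h = π/2 := by rw [hhdef]; field_simp
  have e2 : (∫ t in (((m:ℝ)+1)*h)..(((m:ℝ)+2)*h), carlK N t)
      = ∫ t in ((m:ℝ)*h)..(((m:ℝ)+1)*h), carlK N (t + h) := by
    rw [intervalIntegral.integral_comp_add_right (fun t => carlK N t) h]
    congr 1 <;> ring
  have step1 : carlF N (((m:ℝ)+2) * h) - carlF N ((m:ℝ) * h)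
      = ∫ t in ((m:ℝ)*h)..(((m:ℝ)+1)*h), (carlK N t + carlK N (t + h)) := by
    unfold carlF
    rw [intervalIntegral.integral_interval_sub_left (carlK_intble N 0 _) (carlK_intble N 0 _)]
    rw [← intervalIntegral.integral_add_adjacent_intervals (a := (m:ℝ)*h)
      (b := ((m:ℝ)+1)*h) (c := ((m:ℝ)+2)*h) (carlK_intble N _ _) (carlK_intble N _ _)]
    rw [e2]
    exact (intervalIntegral.integral_add ((carlK_cont N).intervalIntegrable _ _)
      (((carlK_cont N).comp (continuous_add_right h)).intervalIntegrable _ _)).symm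
  rw [step1, ← intervalIntegral.integral_const_mul]
  apply intervalIntegral.intervalIntegral_pos_of_pos_on
  · exact (continuous_const.mul ((carlK_cont N).add
      ((carlK_cont N).comp (continuous_id.add continuous_const)))).intervalIntegrable _ _
  · intro t ht
    obtain ⟨ht1, ht2⟩ := ht
    have hmN : ((m:ℝ)+1) ≤ N := by exact_mod_cast (by omega : m + 1 ≤ N)
    have hm2N : ((m:ℝ)+2) ≤ N := by exact_mod_cast hm
    have ht0 : 0 < t := lt_of_le_of_lt (by positivity) ht1
    have htle : t < π/2 := by nlinarith
    have hthle : t + h ≤ π/2 := by nlinarith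
    have hst : 0 < Real.sin t := sin_t_pos ht0 htle.le
    have hsth : 0 < Real.sin (t + h) := sin_t_pos (by linarith) hthle
    have hmono : Real.sin t < Real.sin (t + h) := by
      apply Real.strictMonoOn_sin ⟨by linarith [Real.pi_pos], htle.le⟩
        ⟨by linarith [Real.pi_pos], hthle⟩ (by linarith)
    have hK1 : carlK N t = Real.sin (2*N*t) / (2 * Real.sin t) := carlK_eq N t (ne_of_gt hst)
    have hK2 : carlK N (t + h) = - Real.sin (2*N*t) / (2 * Real.sin (t+h)) := by
      rw [carlK_eq N (t+h) (ne_of_gt hsth)]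
      have : 2 * (N:ℝ) * (t + h) = 2*N*t + π := by
        rw [hhdef]; field_simp
      rw [this, Real.sin_add_pi]
    rw [hK1, hK2]
    have hsin := carl_sin_sign_strict (by omega : m + 1 ≤ N) ht1 ht2
    have hfrac : 0 < 1 / (2 * Real.sin t) - 1 / (2 * Real.sin (t+h)) := by
      rw [sub_pos]
      apply one_div_lt_one_div_of_lt <;> linarith
    have : (-1:ℝ)^m * (Real.sin (2*N*t) / (2*Real.sin t) + -Real.sin (2*N*t) / (2*Real.sin (t+h)))
        = ((-1:ℝ)^m * Real.sin (2*N*t)) * (1/(2*Real.sin t) - 1/(2*Real.sin (t+h))) := by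
      field_simp
      ring
    rw [this]
    exact mul_pos hsin hfrac
  · nlinarith

lemma carlF_zero (N : ℕ) : carlF N 0 = 0 := intervalIntegral.integral_same

-- even endpoints are nonnegative
lemma carl_even (N : ℕ) : ∀ i : ℕ, 2*i ≤ N → 0 ≤ carlF N ((2*i : ℕ) * (π/(2*N))) := by
  intro i
  induction i with
  | zero => intro _; simp [carlF_zero]
  | succ k ih =>
    intro hk
    have h1 : 2*k ≤ N := by omega
    have hp := carl_pair (N := N) (m := 2*k) (by omega)
    rw [Even.neg_one_pow ⟨k, by ring⟩, one_mul] at hp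
    have e1 : (((2*k : ℕ):ℝ)+2) = ((2*(k+1) : ℕ):ℝ) := by push_cast; ring
    rw [e1] at hp
    linarith [ih h1]

-- even endpoints (i ≥ 1) strictly positive
lemma carl_even_pos (N : ℕ) {i : ℕ} (hi : 1 ≤ i) (h2 : 2*i ≤ N) :
    0 < carlF N ((2*i : ℕ) * (π/(2*N))) := by
  obtain ⟨k, rfl⟩ : ∃ k, i = k + 1 := ⟨i - 1, by omega⟩
  have hp := carl_pair (N := N) (m := 2*k) (by omega)
  rw [Even.neg_one_pow ⟨k, by ring⟩, one_mul] at hp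
  have e1 : (((2*k : ℕ):ℝ)+2) = ((2*(k+1) : ℕ):ℝ) := by push_cast; ring
  rw [e1] at hp
  linarith [carl_even N k (by omega)]

-- odd endpoints are ≤ F(h)
lemma carl_odd_le (N : ℕ) : ∀ i : ℕ, 2*i+1 ≤ N →
    carlF N ((2*i+1 : ℕ) * (π/(2*N))) ≤ carlF N (π/(2*N)) := by
  intro i
  induction i with
  | zero => intro _; norm_num
  | succ k ih =>
    intro hk
    have hp := carl_pair (N := N) (m := 2*k+1) (by omega)
    rw [Odd.neg_one_pow ⟨k, by ring⟩] at hp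
    have e1 : (((2*k+1 : ℕ):ℝ)+2) = ((2*(k+1)+1 : ℕ):ℝ) := by push_cast; ring
    rw [e1] at hp
    have := ih (by omega)
    nlinarith

-- odd endpoints strictly positive
lemma carl_odd_pos (N : ℕ) {i : ℕ} (hi : 2*i+1 ≤ N) :
    0 < carlF N ((2*i+1 : ℕ) * (π/(2*N))) := by
  have hb := carl_block (N := N) (m := 2*i) (by omega)
  rw [Even.neg_one_pow ⟨i, by ring⟩, one_mul] at hb
  have e1 : (((2*i : ℕ):ℝ)+1) = ((2*i+1 : ℕ):ℝ) := by push_cast; ring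
  rw [e1] at hb
  linarith [carl_even N i (by omega)]

-- the key structural lemma on (0, π/2]
lemma carl_main (N : ℕ) (hN : 1 ≤ N) {x : ℝ} (hx0 : 0 < x) (hx2 : x ≤ π/2) :
    0 < carlF N x ∧ carlF N x ≤ carlF N (π/(2*N)) := by
  have hNR : (0:ℝ) < N := by exact_mod_cast hN
  set h : ℝ := π/(2*N) with hhdef
  have hh : (0:ℝ) < h := by positivity
  have hNh : (N:ℝ) * h = π/2 := by rw [hhdef]; field_simp
  set c := ⌈x/h⌉₊ with hc
  have hc1 : 1 ≤ c := by
    rw [hc]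
    exact Nat.one_le_ceil_iff.mpr (by positivity)
  obtain ⟨m, hm⟩ : ∃ m, c = m + 1 := ⟨c - 1, by omega⟩
  have hxle : x ≤ ((m:ℝ)+1) * h := by
    have := Nat.le_ceil (x/h)
    rw [← hc, hm] at this
    push_cast at this
    calc x = (x/h) * h := by field_simp
      _ ≤ ((m:ℝ)+1) * h := by nlinarith
  have hxgt : (m:ℝ) * h < x := by
    have : (m:ℝ) < x/h := by
      have := Nat.lt_ceil.mp (by omega : m < c)
      exact this
    calc (m:ℝ) * h < (x/h) * h := by nlinarith
      _ = x := by field_simp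
  have hmN : m + 1 ≤ N := by
    have : c ≤ N := by
      rw [hc]
      apply Nat.ceil_le.mpr
      rw [div_le_iff₀ hh]
      linarith
    omega
  -- integrals between x and endpoints
  have hsub1 : carlF N (((m:ℝ)+1) * h) - carlF N x = ∫ t in x..(((m:ℝ)+1)*h), carlK N t := by
    unfold carlF
    rw [intervalIntegral.integral_interval_sub_left (carlK_intble N 0 _) (carlK_intble N 0 _)]
  have hsub2 : carlF N x - carlF N ((m:ℝ) * h) = ∫ t in ((m:ℝ)*h)..x, carlK N t := by
    unfold carlF
    rw [intervalIntegral.integral_interval_sub_left (carlK_intble N 0 _) (carlK_intble N 0 _)]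
  rcases Nat.even_or_odd m with he | ho
  · obtain ⟨i, rfl⟩ := he
    have hKnn : ∀ t ∈ Set.Icc ((↑(i+i):ℝ)*h) (((↑(i+i):ℝ)+1)*h), 0 ≤ carlK N t := by
      intro t ht
      have := carlK_sign hmN ht.1 ht.2
      rwa [Even.neg_one_pow ⟨i, rfl⟩, one_mul] at this
    have hup : carlF N x ≤ carlF N (((↑(i+i):ℝ)+1) * h) := by
      have h0 : 0 ≤ ∫ t in x..(((↑(i+i):ℝ)+1)*h), carlK N t :=
        intervalIntegral.integral_nonneg hxle
          (fun t ht => hKnn t ⟨le_trans hxgt.le ht.1, ht.2⟩)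
      linarith [hsub1 ▸ h0]
    have hol := carl_odd_le N i (by omega)
    rw [← hhdef] at hol
    have e1 : ((↑(i+i):ℝ)+1) * h = ((2*i+1 : ℕ):ℝ) * h := by push_cast; ring
    have hle : carlF N x ≤ carlF N h := by rw [e1] at hup; linarith
    refine ⟨?_, hle⟩
    rcases Nat.eq_zero_or_pos i with hi0 | hipos
    · subst hi0
      have hpos : 0 < ∫ t in (0:ℝ)..x, carlK N t := by
        apply intervalIntegral.intervalIntegral_pos_of_pos_on (carlK_intble N 0 x) _ hx0
        intro t ht
        have hxle' : x ≤ ((0:ℝ)+1) * (π/(2*N)) := by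
          rw [← hhdef]; simpa using hxle
        have := carlK_pos (N := N) (m := 0) (by omega)
          (by simpa using ht.1) (lt_of_lt_of_le ht.2 (by simpa using hxle'))
        simpa using this
      simpa [carlF] using hpos
    · have hep := carl_even_pos N hipos (by omega : 2*i ≤ N)
      rw [← hhdef] at hep
      have e2 : ((↑(i+i):ℝ)) * h = ((2*i : ℕ):ℝ) * h := by push_cast; ring
      have hlow : carlF N ((↑(i+i):ℝ) * h) ≤ carlF N x := by
        have h0 : 0 ≤ ∫ t in ((↑(i+i):ℝ)*h)..x, carlK N t :=
          intervalIntegral.integral_nonneg hxgt.le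
            (fun t ht => hKnn t ⟨ht.1, le_trans ht.2 hxle⟩)
        linarith [hsub2 ▸ h0]
      rw [e2] at hlow
      linarith
  · obtain ⟨i, rfl⟩ := ho
    have hKnp : ∀ t ∈ Set.Icc ((↑(2*i+1):ℝ)*h) (((↑(2*i+1):ℝ)+1)*h), carlK N t ≤ 0 := by
      intro t ht
      have := carlK_sign hmN ht.1 ht.2
      rw [Odd.neg_one_pow ⟨i, rfl⟩] at this
      linarith
    have hdown : carlF N (((↑(2*i+1):ℝ)+1) * h) ≤ carlF N x := by
      have h0 : (∫ t in x..(((↑(2*i+1):ℝ))+1)*h, carlK N t) ≤ 0 := by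
        rw [← neg_nonneg, ← intervalIntegral.integral_neg]
        exact intervalIntegral.integral_nonneg hxle
          (fun t ht => neg_nonneg.mpr (hKnp t ⟨le_trans hxgt.le ht.1, ht.2⟩))
      linarith [hsub1 ▸ h0]
    have hdown2 : carlF N x ≤ carlF N ((↑(2*i+1):ℝ) * h) := by
      have h0 : (∫ t in ((↑(2*i+1):ℝ)*h)..x, carlK N t) ≤ 0 := by
        rw [← neg_nonneg, ← intervalIntegral.integral_neg]
        exact intervalIntegral.integral_nonneg hxgt.le
          (fun t ht => neg_nonneg.mpr (hKnp t ⟨ht.1, le_trans ht.2 hxle⟩))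
      linarith [hsub2 ▸ h0]
    constructor
    · have hep := carl_even_pos N (i := i+1) (by omega) (by omega)
      rw [← hhdef] at hep
      have e1 : ((↑(2*i+1):ℝ)+1) * h = ((2*(i+1) : ℕ):ℝ) * h := by push_cast; ring
      rw [e1] at hdown
      linarith
    · have hol := carl_odd_le N i (by omega)
      rw [← hhdef] at hol
      linarith

-- Taylor-type bounds for sin
lemma carl_sin_ge_cubic {u : ℝ} (hu : 0 ≤ u) : u - u^3/6 ≤ Real.sin u := by
  have hD : ∀ t : ℝ, HasDerivAt (fun v => Real.sin v - v + v^3/6)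
      (Real.cos t - 1 + t^2/2) t := by
    intro t
    have H := ((Real.hasDerivAt_sin t).sub (hasDerivAt_id t)).add
      ((hasDerivAt_pow 3 t).div_const 6)
    refine H.congr_deriv ?_
    push_cast; ring
  have mono : MonotoneOn (fun v => Real.sin v - v + v^3/6) (Set.Ici 0) := by
    apply monotoneOn_of_deriv_nonneg (convex_Ici 0)
    · exact (Continuous.continuousOn (by continuity))
    · intro t _
      exact (hD t).differentiableAt.differentiableWithinAt
    · intro t _
      rw [(hD t).deriv]
      nlinarith [Real.one_sub_sq_div_two_le_cos (x := t)]
  have := mono (Set.mem_Ici.mpr le_rfl) (Set.mem_Ici.mpr hu) hu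
  simp only [Real.sin_zero] at this
  nlinarith

lemma carl_cos_le_quartic {u : ℝ} (hu : 0 ≤ u) : Real.cos u ≤ 1 - u^2/2 + u^4/24 := by
  have hD : ∀ t : ℝ, HasDerivAt (fun v => 1 - v^2/2 + v^4/24 - Real.cos v)
      (-t + t^3/6 + Real.sin t) t := by
    intro t
    have H := (((hasDerivAt_const t (1:ℝ)).sub ((hasDerivAt_pow 2 t).div_const 2)).add
      ((hasDerivAt_pow 4 t).div_const 24)).sub (Real.hasDerivAt_cos t)
    refine H.congr_deriv ?_
    push_cast; ring
  have mono : MonotoneOn (fun v => 1 - v^2/2 + v^4/24 - Real.cos v) (Set.Ici 0) := by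
    apply monotoneOn_of_deriv_nonneg (convex_Ici 0)
    · exact (Continuous.continuousOn (by continuity))
    · intro t _
      exact (hD t).differentiableAt.differentiableWithinAt
    · intro t ht
      rw [(hD t).deriv]
      have ht' : (0:ℝ) ≤ t := le_of_lt (by simpa using ht)
      nlinarith [carl_sin_ge_cubic ht']
  have := mono (Set.mem_Ici.mpr le_rfl) (Set.mem_Ici.mpr hu) hu
  simp only [Real.cos_zero] at this
  nlinarith

lemma carl_sin_le_quintic {u : ℝ} (hu : 0 ≤ u) : Real.sin u ≤ u - u^3/6 + u^5/120 := by
  have hD : ∀ t : ℝ, HasDerivAt (fun v => v - v^3/6 + v^5/120 - Real.sin v)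
      (1 - t^2/2 + t^4/24 - Real.cos t) t := by
    intro t
    have H := (((hasDerivAt_id t).sub ((hasDerivAt_pow 3 t).div_const 6)).add
      ((hasDerivAt_pow 5 t).div_const 120)).sub (Real.hasDerivAt_sin t)
    refine H.congr_deriv ?_
    push_cast; ring
  have mono : MonotoneOn (fun v => v - v^3/6 + v^5/120 - Real.sin v) (Set.Ici 0) := by
    apply monotoneOn_of_deriv_nonneg (convex_Ici 0)
    · exact (Continuous.continuousOn (by continuity))
    · intro t _
      exact (hD t).differentiableAt.differentiableWithinAt
    · intro t ht
      rw [(hD t).deriv]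
      have ht' : (0:ℝ) ≤ t := le_of_lt (by simpa using ht)
      nlinarith [carl_cos_le_quartic ht']
  have := mono (Set.mem_Ici.mpr le_rfl) (Set.mem_Ici.mpr hu) hu
  simp only [Real.sin_zero] at this
  nlinarith

-- odd power sums
lemma carl_sq_sum (N : ℕ) : ∑ j ∈ Finset.range N, ((2*(j:ℝ)+1))^2 = (4*(N:ℝ)^3 - N)/3 := by
  induction N with
  | zero => simp
  | succ k ih =>
    rw [Finset.sum_range_succ, ih]
    push_cast
    ring

lemma carl_qu_sum (N : ℕ) : ∑ j ∈ Finset.range N, ((2*(j:ℝ)+1))^4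
    = (48*(N:ℝ)^5 - 40*(N:ℝ)^3 + 7*N)/15 := by
  induction N with
  | zero => simp
  | succ k ih =>
    rw [Finset.sum_range_succ, ih]
    push_cast
    ring

-- FTC : the partial sum equals carlF
lemma carl_sum_eq (N : ℕ) (x : ℝ) :
    ∑ j ∈ Finset.range N, Real.sin ((2 * (j:ℝ) + 1) * x) / (2 * (j:ℝ) + 1) = carlF N x := by
  unfold carlF carlK
  rw [intervalIntegral.integral_finset_sum]
  · apply Finset.sum_congr rfl
    intro j _
    have hc : (2*(j:ℝ)+1) ≠ 0 := by positivity
    rw [intervalIntegral.integral_comp_mul_left (fun u => Real.cos u) hc]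
    simp [Real.sin_zero, smul_eq_mul]
    rw [eq_comm, inv_mul_eq_div, div_eq_div_iff hc hc]
  · intro j _
    exact (Real.continuous_cos.comp (continuous_const.mul continuous_id)).intervalIntegrable _ _

-- numeric bound at the first maximum, for N ≥ 2
set_option maxHeartbeats 2000000 in
lemma carl_peak_lt (N : ℕ) (hN : 2 ≤ N) : carlF N (π/(2*N)) < 1 := by
  have hNR : (2:ℝ) ≤ N := by exact_mod_cast hN
  have hN0 : (0:ℝ) < N := by linarith
  set h : ℝ := π/(2*N) with hhdef
  have hh : 0 < h := by rw [hhdef]; positivity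
  rw [← carl_sum_eq]
  have hterm : ∀ j ∈ Finset.range N, Real.sin ((2*(j:ℝ)+1) * h) / (2*(j:ℝ)+1)
      ≤ h - (2*(j:ℝ)+1)^2 * (h^3/6) + (2*(j:ℝ)+1)^4 * (h^5/120) := by
    intro j _
    have hc : (0:ℝ) < 2*(j:ℝ)+1 := by positivity
    have hq := carl_sin_le_quintic (u := (2*(j:ℝ)+1) * h) (by positivity)
    rw [div_le_iff₀ hc]
    calc Real.sin ((2*(j:ℝ)+1) * h)
        ≤ (2*(j:ℝ)+1)*h - ((2*(j:ℝ)+1)*h)^3/6 + ((2*(j:ℝ)+1)*h)^5/120 := hq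
      _ = (h - (2*(j:ℝ)+1)^2 * (h^3/6) + (2*(j:ℝ)+1)^4 * (h^5/120)) * (2*(j:ℝ)+1) := by ring
  have hsum := Finset.sum_le_sum hterm
  have hrhs : ∑ j ∈ Finset.range N, (h - (2*(j:ℝ)+1)^2 * (h^3/6) + (2*(j:ℝ)+1)^4 * (h^5/120))
      = (N:ℝ)*h - ((4*(N:ℝ)^3 - N)/3) * (h^3/6)
        + ((48*(N:ℝ)^5 - 40*(N:ℝ)^3 + 7*N)/15) * (h^5/120) := by
    rw [Finset.sum_add_distrib, Finset.sum_sub_distrib, Finset.sum_const, Finset.card_range,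
      ← Finset.sum_mul, ← Finset.sum_mul, carl_sq_sum, carl_qu_sum, nsmul_eq_mul]
  have hπu := Real.pi_lt_d6
  have hπl := Real.pi_gt_d6
  have hπ0 := Real.pi_pos
  have p2u : π^2 < 9.869608 := by nlinarith
  have p2l : (9.8696:ℝ) < π^2 := by nlinarith
  have p3u : π^3 < 31.00629 := by nlinarith
  have p3l : (31.00623:ℝ) < π^3 := by nlinarith
  have p5u : π^5 < 306.0208 := by nlinarith
  have p5l : (306.018:ℝ) < π^5 := by nlinarith
  set s : ℝ := (N:ℝ) with hsdef
  have hs2 : 4 ≤ s^2 := by nlinarith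
  have hs4 : 4*s^2 ≤ s^4 := by nlinarith
  have key : (28800*π*s^4 + 48*π^5*s^4 - 40*π^5*s^2 + 7*π^5)
      - (57600*s^4 + 1600*π^3*s^4 - 400*π^3*s^2) < 0 := by nlinarith
  have hfin : s*h - ((4*s^3 - s)/3) * (h^3/6)
      + ((48*s^5 - 40*s^3 + 7*s)/15) * (h^5/120) < 1 := by
    have hs0 : (0:ℝ) < s := hN0
    have hE : s*h - ((4*s^3 - s)/3) * (h^3/6) + ((48*s^5 - 40*s^3 + 7*s)/15) * (h^5/120) - 1
        = ((28800*π*s^4 + 48*π^5*s^4 - 40*π^5*s^2 + 7*π^5)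
          - (57600*s^4 + 1600*π^3*s^4 - 400*π^3*s^2)) / (57600*s^4) := by
      rw [hhdef]
      field_simp
      ring
    have : s*h - ((4*s^3 - s)/3) * (h^3/6) + ((48*s^5 - 40*s^3 + 7*s)/15) * (h^5/120) - 1 < 0 := by
      rw [hE]
      exact div_neg_of_neg_of_pos key (by positivity)
    linarith
  calc ∑ j ∈ Finset.range N, Real.sin ((2*(j:ℝ)+1) * h) / (2*(j:ℝ)+1)
      ≤ ∑ j ∈ Finset.range N, (h - (2*(j:ℝ)+1)^2 * (h^3/6) + (2*(j:ℝ)+1)^4 * (h^5/120)) := hsum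
    _ = s*h - ((4*s^3 - s)/3) * (h^3/6) + ((48*s^5 - 40*s^3 + 7*s)/15) * (h^5/120) := hrhs
    _ < 1 := hfin

lemma carl_sum_symm (N : ℕ) (x : ℝ) :
    ∑ j ∈ Finset.range N, Real.sin ((2*(j:ℝ)+1) * (π - x)) / (2*(j:ℝ)+1)
    = ∑ j ∈ Finset.range N, Real.sin ((2*(j:ℝ)+1) * x) / (2*(j:ℝ)+1) := by
  apply Finset.sum_congr rfl
  intro j _
  congr 1
  have e : (2*(j:ℝ)+1) * (π - x) = ((2*(j:ℤ)+1 : ℤ):ℝ) * π - (2*(j:ℝ)+1) * x := by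
    push_cast; ring
  rw [e, Real.sin_int_mul_pi_sub, Odd.neg_one_zpow ⟨(j:ℤ), by ring⟩]
  ring

lemma carl_sin_eq_one {x : ℝ} (h0 : 0 < x) (h1 : x < π) : Real.sin x = 1 ↔ x = π/2 := by
  constructor
  · intro hs
    by_contra hne
    rcases lt_or_gt_of_ne hne with hlt | hgt
    · have h2 : Real.sin x < Real.sin (π/2) :=
        Real.strictMonoOn_sin ⟨by linarith [Real.pi_pos], by linarith⟩
          ⟨by linarith [Real.pi_pos], le_rfl⟩ hlt
      rw [Real.sin_pi_div_two] at h2; linarith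
    · have hlt2 : π - x < π/2 := by linarith
      have h2 : Real.sin (π - x) < Real.sin (π/2) :=
        Real.strictMonoOn_sin ⟨by linarith [Real.pi_pos], by linarith⟩
          ⟨by linarith [Real.pi_pos], le_rfl⟩ hlt2
      rw [Real.sin_pi_sub, Real.sin_pi_div_two] at h2; linarith
  · intro h; rw [h, Real.sin_pi_div_two]

theorem stmt_19 (n : ℕ) (x : ℝ) (hx : x ∈ Set.Ioo 0 Real.pi) :
    (0 < ∑ j ∈ Finset.range (n + 1), Real.sin ((2 * j + 1) * x) / (2 * j + 1)) ∧
    ((∑ j ∈ Finset.range (n + 1), Real.sin ((2 * j + 1) * x) / (2 * j + 1)) ≤ 1) ∧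
    ((∑ j ∈ Finset.range (n + 1), Real.sin ((2 * j + 1) * x) / (2 * j + 1)) = 1 ↔
      n = 0 ∧ x = Real.pi / 2) := by
  obtain ⟨hx0, hxpi⟩ := hx
  by_cases hn : n = 0
  · subst hn
    rw [Finset.sum_range_one]
    norm_num
    refine ⟨Real.sin_pos_of_pos_of_lt_pi hx0 hxpi, Real.sin_le_one x, ?_⟩
    rw [carl_sin_eq_one hx0 hxpi]
  · have hN2 : 2 ≤ n + 1 := by omega
    have key : ∀ y : ℝ, 0 < y → y ≤ π/2 →
        0 < (∑ j ∈ Finset.range (n+1), Real.sin ((2*(j:ℝ)+1)*y)/(2*(j:ℝ)+1)) ∧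
        (∑ j ∈ Finset.range (n+1), Real.sin ((2*(j:ℝ)+1)*y)/(2*(j:ℝ)+1)) < 1 := by
      intro y hy0 hy2
      have hm := carl_main (n+1) (by omega) hy0 hy2
      have hp := carl_peak_lt (n+1) hN2
      rw [carl_sum_eq]
      exact ⟨hm.1, lt_of_le_of_lt hm.2 hp⟩
    have hlt1 : 0 < (∑ j ∈ Finset.range (n+1), Real.sin ((2*(j:ℝ)+1)*x)/(2*(j:ℝ)+1)) ∧
        (∑ j ∈ Finset.range (n+1), Real.sin ((2*(j:ℝ)+1)*x)/(2*(j:ℝ)+1)) < 1 := by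
      rcases le_or_gt x (π/2) with hc | hc
      · exact key x hx0 hc
      · have h2 := key (π - x) (by linarith) (by linarith)
        rwa [carl_sum_symm] at h2
    refine ⟨hlt1.1, hlt1.2.le, ?_, ?_⟩
    · intro h; exfalso; linarith [hlt1.2]
    · rintro ⟨h0, _⟩; exact absurd h0 hn
end
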